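/- (Theorem 1.2, integral-equation form.) Let a > 0, let q : ℝ³ → ℝ be bounded and uniformly continuous with q(x) ≥ a² for all x, put p = q − a². Let f : ℝ → ℝ be continuously differentiable. Fix R > 0, set M(R) = sup_{|t|≤R} |f(t)| and M₁(R) = sup_{|t|≤2R} |f'(t)|, and assume (‖p‖∞ · R + M(R))/a² ≤ R and (‖p‖∞ + M₁(R))/a² ≤ γ for some γ with 0 < γ < 1. For each ε > 0 let u_ε be the unique bounded continuous function with ‖u_ε‖∞ ≤ R satisfying u_ε(x) = ∫_{ℝ³} g_{a,ε}(x,y)(−p(y)u_ε(y) + f(u_ε(y))) dy for all x, and let u be the unique bounded continuous function with ‖u‖∞ ≤ R satisfying q(x)u(x) = f(u(x)) for all x. Then ‖u_ε − u‖∞ → 0 as ε → 0⁺. -/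

import Mathlib

/-!
Subtracting `u₀ x = a² u₀ x · ∫ g_{a,ε}(x, y) dy` from the integral equation gives
`u_ε x - u₀ x = ∫ g_{a,ε}(x, y) ((N u_ε)(y) - a² u₀ x) dy` with `N u = -p u + f(u)`.
Since `N u₀ = a² u₀`, the integrand splits into `(N u_ε - N u₀)(y)`, bounded by
`(‖p‖∞ + M₁) ‖u_ε - u₀‖ ≤ γ a² ‖u_ε - u₀‖`, and `a² (u₀ y - u₀ x)`.
The limiting equation makes `u₀` uniformly continuous (`|u₀ x - u₀ y| ≲ |q x - q y|`), with
modulus `ω`, so the second term is at most `a² ω(δ)` for `|x - y| ≤ δ`, while for `|x - y| > δ`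
the kernel is at most `exp (-aδ/(2ε)) g_{a/2,ε}(x, y)`. Hence
`(1 - γ) ‖u_ε - u₀‖ ≤ ω(δ) + 8 R exp (-aδ/(2ε))`, and letting `ε → 0⁺`, then `δ → 0`, proves
the claim.
-/

open MeasureTheory Real Set Filter Topology BoundedContinuousFunction

local notation "ℝ³" => EuclideanSpace ℝ (Fin 3)

noncomputable def greenKernel (a ε : ℝ) (z : ℝ³) : ℝ :=
  exp (-(a / ε) * ‖z‖) / (4 * π * ε ^ 2 * ‖z‖)

lemma greenKernel_nonneg (a ε : ℝ) (z : ℝ³) : 0 ≤ greenKernel a ε z := by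
  unfold greenKernel; positivity

lemma integrable_greenKernel {a ε : ℝ} (ha : 0 < a) (hε : 0 < ε) :
    Integrable (greenKernel a ε) := by
  refine (integrable_fun_norm_addHaar volume
    (f := fun r => exp (-(a / ε) * r) / (4 * π * ε ^ 2 * r))).2 ?_
  rw [finrank_euclideanSpace_fin]
  refine IntegrableOn.congr_fun ((integrableOn_rpow_mul_exp_neg_mul_rpow (s := 1) (p := 1)
    (b := a / ε) (by norm_num) one_pos (by positivity)).const_mul (1 / (4 * π * ε ^ 2)))
    (fun r (hr : 0 < r) => ?_) measurableSet_Ioi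
  simp only [rpow_one, smul_eq_mul]
  field_simp

lemma integral_greenKernel {a ε : ℝ} (ha : 0 < a) (hε : 0 < ε) :
    ∫ z, greenKernel a ε z = 1 / a ^ 2 := by
  unfold greenKernel
  rw [integral_fun_norm_addHaar volume
    (fun r => exp (-(a / ε) * r) / (4 * π * ε ^ 2 * r)), finrank_euclideanSpace_fin,
    measureReal_def, EuclideanSpace.volume_ball_fin_three]
  have hprofile : ∀ r ∈ Ioi (0 : ℝ), r ^ (3 - 1) • (exp (-(a / ε) * r) / (4 * π * ε ^ 2 * r))
      = 1 / (4 * π * ε ^ 2) * (r ^ ((2 : ℝ) - 1) * exp (-((a / ε) * r))) := by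
    intro r (hr : 0 < r)
    rw [show (2 : ℝ) - 1 = 1 by norm_num, rpow_one, smul_eq_mul, neg_mul]
    field_simp
  rw [setIntegral_congr_fun measurableSet_Ioi hprofile, integral_const_mul,
    integral_rpow_mul_exp_neg_mul_Ioi two_pos (by positivity), Gamma_two,
    show (2 : ℝ) = ((2 : ℕ) : ℝ) by norm_num, rpow_natCast]
  simp only [nsmul_eq_mul, smul_eq_mul, ENNReal.toReal_mul, ENNReal.toReal_pow]
  rw [ENNReal.toReal_ofReal one_pos.le, ENNReal.toReal_ofReal (by positivity)]
  field_simp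
  ring

lemma greenKernel_le_of_le_norm {a ε δ : ℝ} (ha : 0 ≤ a) (hε : 0 < ε) {z : ℝ³}
    (hz : δ ≤ ‖z‖) :
    greenKernel a ε z ≤ exp (-(a * δ / 2 / ε)) * greenKernel (a / 2) ε z := by
  have hsplit : greenKernel a ε z = exp (-(a / 2 / ε) * ‖z‖) * greenKernel (a / 2) ε z := by
    rw [greenKernel, greenKernel, mul_div_assoc', ← exp_add]
    ring_nf
  rw [hsplit]
  gcongr
  · exact greenKernel_nonneg _ _ _
  · rw [neg_mul, neg_le_neg_iff, div_div, div_div, mul_comm a δ, mul_div_assoc, mul_comm δ]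
    exact mul_le_mul_of_nonneg_left hz (by positivity)

lemma ContDiff.abs_sub_le_sSup_abs_deriv_mul {f : ℝ → ℝ} (hf : ContDiff ℝ 1 f) {a b s t : ℝ}
    (hs : s ∈ Icc a b) (ht : t ∈ Icc a b) :
    |f s - f t| ≤ sSup ((fun x => |deriv f x|) '' Icc a b) * |s - t| := by
  have hbdd := ((isCompact_Icc (a := a) (b := b)).image (hf.continuous_deriv le_rfl).abs).bddAbove
  simpa only [Real.norm_eq_abs] using (convex_Icc a b).norm_image_sub_le_of_norm_deriv_le
    (fun x _ => (hf.differentiable one_ne_zero).differentiableAt)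
    (fun x hx => le_csSup hbdd (mem_image_of_mem _ hx)) ht hs

lemma abs_nonlinearity_sub_le {f : ℝ → ℝ} {p P L s t : ℝ} (hp : 0 ≤ p) (hpP : p ≤ P)
    (hf : |f s - f t| ≤ L * |s - t|) :
    |(-p * s + f s) - (-p * t + f t)| ≤ (P + L) * |s - t| :=
  calc |(-p * s + f s) - (-p * t + f t)| = |-(p * (s - t)) + (f s - f t)| := by ring_nf
    _ ≤ p * |s - t| + L * |s - t| := by
      grw [abs_add_le, abs_neg, abs_mul, abs_of_nonneg hp, hf]
    _ ≤ (P + L) * |s - t| := by nlinarith [abs_nonneg (s - t)]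

lemma uniformContinuous_of_abs_sub_le_mul {X : Type*} [PseudoMetricSpace X] {q u : X → ℝ}
    (hq : UniformContinuous q) {C : ℝ} (hu : ∀ x y, |u x - u y| ≤ C * |q x - q y|) :
    UniformContinuous u := by
  rw [Metric.uniformContinuous_iff_le] at hq ⊢
  intro η hη
  obtain ⟨δ, hδ, hqδ⟩ := hq (η / (|C| + 1)) (by positivity)
  refine ⟨δ, hδ, fun x y hxy => ?_⟩
  have hqxy : |q x - q y| ≤ η / (|C| + 1) := hqδ hxy
  calc dist (u x) (u y) = |u x - u y| := Real.dist_eq _ _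
    _ ≤ |C| * (η / (|C| + 1)) := (hu x y).trans (by gcongr; exact le_abs_self C)
    _ ≤ η := by
      rw [mul_div_assoc']
      exact (div_le_iff₀ (by positivity)).2 (by nlinarith)

lemma sub_mul_abs_sub_le_of_mul_eq {X : Type*} {q u : X → ℝ} {f : ℝ → ℝ} {c L R : ℝ}
    (hq : ∀ x, c ≤ q x) (hLip : ∀ s t, |s| ≤ R → |t| ≤ R → |f s - f t| ≤ L * |s - t|)
    (hu : ∀ x, |u x| ≤ R) (heq : ∀ x, q x * u x = f (u x)) (x y : X) :
    (c - L) * |u x - u y| ≤ R * |q x - q y| := by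
  have hsplit : q x * (u x - u y) = (f (u x) - f (u y)) - (q x - q y) * u y := by
    rw [← heq, ← heq]; ring
  have hqx : q x * |u x - u y| ≤ L * |u x - u y| + R * |q x - q y| :=
    calc q x * |u x - u y| ≤ |q x * (u x - u y)| := by
          rw [abs_mul]; gcongr; exact le_abs_self _
      _ ≤ |f (u x) - f (u y)| + |q x - q y| * |u y| := by
          rw [hsplit, ← abs_mul]; exact abs_sub _ _
      _ ≤ L * |u x - u y| + R * |q x - q y| := by
          grw [hLip _ _ (hu x) (hu y), hu y, mul_comm R]
  nlinarith [mul_le_mul_of_nonneg_right (hq x) (abs_nonneg (u x - u y))]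

lemma greenKernel_mul_abs_sub_le {a ε δ ω R : ℝ} (ha : 0 ≤ a) (hε : 0 < ε) (hω : 0 ≤ ω)
    {w : ℝ³ → ℝ} (hw : ∀ y, |w y| ≤ R) (hmod : ∀ x y, dist x y ≤ δ → |w x - w y| ≤ ω)
    (x y : ℝ³) :
    greenKernel a ε (x - y) * |w y - w x| ≤ ω * greenKernel a ε (x - y) +
      2 * R * exp (-(a * δ / 2 / ε)) * greenKernel (a / 2) ε (x - y) := by
  have hR : 0 ≤ R := (abs_nonneg _).trans (hw x)
  have hG := greenKernel_nonneg a ε (x - y)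
  have hG' := greenKernel_nonneg (a / 2) ε (x - y)
  rcases le_or_gt (dist x y) δ with hnear | hfar
  · have hfar_term : 0 ≤ 2 * R * exp (-(a * δ / 2 / ε)) * greenKernel (a / 2) ε (x - y) := by
      positivity
    nlinarith [mul_le_mul_of_nonneg_left (hmod y x (by rwa [dist_comm])) hG]
  · have htail : greenKernel a ε (x - y) ≤ exp (-(a * δ / 2 / ε)) * greenKernel (a / 2) ε (x - y) :=
      greenKernel_le_of_le_norm ha hε (by rw [← dist_eq_norm]; exact hfar.le)
    have hdiff : |w y - w x| ≤ 2 * R := by linarith [abs_sub (w y) (w x), hw x, hw y]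
    nlinarith [mul_le_mul htail hdiff (abs_nonneg _) (by positivity), mul_nonneg hω hG]

lemma tendsto_exp_neg_div_nhdsGT_zero {c : ℝ} (hc : 0 < c) :
    Tendsto (fun ε => exp (-(c / ε))) (𝓝[>] 0) (𝓝 0) :=
  tendsto_exp_neg_atTop_nhds_zero.comp <|
    (tendsto_inv_nhdsGT_zero.const_mul_atTop hc).congr fun ε => (div_eq_mul_inv c ε).symm

lemma abs_integral_greenKernel_mul_sub_le {a ε δ ω R K : ℝ} (ha : 0 < a) (hε : 0 < ε)
    (hδ : 0 ≤ δ) {F u₀ : ℝ³ → ℝ} (hFc : Continuous F) (hu₀ : ∀ y, |u₀ y| ≤ R)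
    (hmod : ∀ x y, dist x y ≤ δ → |u₀ x - u₀ y| ≤ ω) (hF : ∀ y, |F y - a ^ 2 * u₀ y| ≤ K)
    (x : ℝ³) :
    |(∫ y, greenKernel a ε (x - y) * F y) - u₀ x| ≤
      K / a ^ 2 + ω + 8 * R * exp (-(a * δ / 2 / ε)) := by
  have hω : 0 ≤ ω := (abs_nonneg _).trans (hmod x x (by rwa [dist_self]))
  set e := exp (-(a * δ / 2 / ε))
  set G := fun y => greenKernel a ε (x - y)
  set G' := fun y => greenKernel (a / 2) ε (x - y)
  have hGint : Integrable G := (integrable_greenKernel ha hε).comp_sub_left x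
  have hG'int : Integrable G' := (integrable_greenKernel (half_pos ha) hε).comp_sub_left x
  have hGval : ∫ y, G y = 1 / a ^ 2 := by
    rw [integral_sub_left_eq_self (greenKernel a ε), integral_greenKernel ha hε]
  have hG'val : ∫ y, G' y = 4 / a ^ 2 := by
    rw [integral_sub_left_eq_self (greenKernel (a / 2) ε), integral_greenKernel (half_pos ha) hε]
    ring
  have hbound : ∀ y, ‖G y * (F y - a ^ 2 * u₀ x)‖ ≤
      (K + a ^ 2 * ω) * G y + 2 * R * a ^ 2 * e * G' y := by
    intro y
    have hnearfar := greenKernel_mul_abs_sub_le ha.le hε hω hu₀ hmod x y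
    have hG : 0 ≤ G y := greenKernel_nonneg a ε (x - y)
    calc ‖G y * (F y - a ^ 2 * u₀ x)‖
        = G y * |(F y - a ^ 2 * u₀ y) + a ^ 2 * (u₀ y - u₀ x)| := by
          rw [Real.norm_eq_abs, abs_mul, abs_of_nonneg hG]; ring_nf
      _ ≤ G y * (K + a ^ 2 * |u₀ y - u₀ x|) := by
          grw [abs_add_le, hF, abs_mul, abs_of_nonneg (sq_nonneg a)]
      _ ≤ _ := by nlinarith [sq_nonneg a]
  have hmajor := (hGint.const_mul (K + a ^ 2 * ω)).add (hG'int.const_mul (2 * R * a ^ 2 * e))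
  have hFint : Integrable (fun y => G y * F y) := by
    refine ((hmajor.mono' ?_ (.of_forall hbound)).add (hGint.mul_const (a ^ 2 * u₀ x))).congr
      (.of_forall fun y => by simp only [Pi.add_apply]; ring)
    exact hGint.aestronglyMeasurable.mul (by fun_prop)
  have hrepr : (∫ y, G y * F y) - u₀ x = ∫ y, G y * (F y - a ^ 2 * u₀ x) := by
    simp_rw [mul_sub]
    rw [integral_sub hFint (hGint.mul_const _), integral_mul_const, hGval]
    field_simp
  calc |(∫ y, G y * F y) - u₀ x| = ‖∫ y, G y * (F y - a ^ 2 * u₀ x)‖ := by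
        rw [hrepr, Real.norm_eq_abs]
    _ ≤ ∫ y, ((K + a ^ 2 * ω) * G y + 2 * R * a ^ 2 * e * G' y) :=
        norm_integral_le_of_norm_le hmajor (.of_forall hbound)
    _ = K / a ^ 2 + ω + 8 * R * e := by
        rw [integral_add (hGint.const_mul _) (hG'int.const_mul _), integral_const_mul,
          integral_const_mul, hGval, hG'val]
        field_simp
        ring

theorem norm_sub_le_of_eq_integral_greenKernel {q : ℝ³ → ℝ} {f : ℝ → ℝ} {a ε R P L γ δ ω : ℝ}
    (ha : 0 < a) (hε : 0 < ε) (hδ : 0 ≤ δ) (hqc : Continuous q) (hq : ∀ x, a ^ 2 ≤ q x)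
    (hP : ∀ x, q x - a ^ 2 ≤ P) (hfc : Continuous f) (hL : 0 ≤ L)
    (hLip : ∀ s t, |s| ≤ R → |t| ≤ R → |f s - f t| ≤ L * |s - t|) (hPL : P + L ≤ γ * a ^ 2)
    {v u₀ : ℝ³ →ᵇ ℝ} (hv : ‖v‖ ≤ R) (hu₀ : ‖u₀‖ ≤ R)
    (hveq : ∀ x, v x = ∫ y, greenKernel a ε (x - y) * (-(q y - a ^ 2) * v y + f (v y)))
    (hu₀eq : ∀ x, q x * u₀ x = f (u₀ x)) (hmod : ∀ x y, dist x y ≤ δ → |u₀ x - u₀ y| ≤ ω) :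
    ‖v - u₀‖ ≤ γ * ‖v - u₀‖ + ω + 8 * R * exp (-(a * δ / 2 / ε)) := by
  have habs : ∀ (w : ℝ³ →ᵇ ℝ) y, |w y| ≤ ‖w‖ := fun w y => w.norm_coe_le_norm y
  have hF : ∀ y, |(-(q y - a ^ 2) * v y + f (v y)) - a ^ 2 * u₀ y| ≤ γ * a ^ 2 * ‖v - u₀‖ :=
    fun y => calc
      _ = |(-(q y - a ^ 2) * v y + f (v y)) - (-(q y - a ^ 2) * u₀ y + f (u₀ y))| := by
          rw [← hu₀eq]; ring_nf
      _ ≤ (P + L) * |v y - u₀ y| :=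
          abs_nonlinearity_sub_le (sub_nonneg.2 (hq y)) (hP y)
            (hLip _ _ ((habs v y).trans hv) ((habs u₀ y).trans hu₀))
      _ ≤ γ * a ^ 2 * ‖v - u₀‖ := by
          have hP0 : 0 ≤ P := (sub_nonneg.2 (hq y)).trans (hP y)
          exact mul_le_mul hPL (habs (v - u₀) y) (abs_nonneg _) (by linarith)
  refine norm_le_of_nonempty.2 fun x => ?_
  have hx := abs_integral_greenKernel_mul_sub_le ha hε hδ (by fun_prop)
    (fun y => (habs u₀ y).trans hu₀) hmod hF x
  rwa [← hveq, mul_right_comm, mul_div_cancel_right₀ _ (pow_pos ha 2).ne'] at hx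

theorem solutions_converge_to_limiting_solution_general (a R γ : ℝ) (ha : 0 < a)
    (hγ1 : γ < 1)
    (q : EuclideanSpace ℝ (Fin 3) → ℝ)
    (hqunif : UniformContinuous q) (hq : ∀ x, a ^ 2 ≤ q x)
    (Pn : ℝ) (hPn : IsLUB (Set.range fun x => q x - a ^ 2) Pn)
    (f : ℝ → ℝ) (hf : ContDiff ℝ 1 f)
    (M₁ : ℝ) (hM₁ : M₁ = sSup ((fun t => |deriv f t|) '' Set.Icc (-(2 * R)) (2 * R)))
    (hcond2 : (Pn + M₁) / a ^ 2 ≤ γ)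
    (u : ℝ → BoundedContinuousFunction (EuclideanSpace ℝ (Fin 3)) ℝ)
    (huR : ∀ ε : ℝ, 0 < ε → ‖u ε‖ ≤ R)
    (hueq : ∀ ε : ℝ, 0 < ε → ∀ x : EuclideanSpace ℝ (Fin 3),
      u ε x = ∫ y : EuclideanSpace ℝ (Fin 3),
        Real.exp (-(a / ε) * ‖x - y‖) / (4 * Real.pi * ε ^ 2 * ‖x - y‖) *
          (-(q y - a ^ 2) * u ε y + f (u ε y)))
    (u₀ : BoundedContinuousFunction (EuclideanSpace ℝ (Fin 3)) ℝ)
    (hu₀R : ‖u₀‖ ≤ R)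
    (hu₀eq : ∀ x : EuclideanSpace ℝ (Fin 3), q x * u₀ x = f (u₀ x)) :
    Filter.Tendsto (fun ε : ℝ => ‖u ε - u₀‖) (nhdsWithin 0 (Set.Ioi 0)) (nhds 0) := by
  have hγ : 0 < 1 - γ := sub_pos.2 hγ1
  have hu₀bdd : ∀ x, |u₀ x| ≤ R := fun x => (u₀.norm_coe_le_norm x).trans hu₀R
  have hP : ∀ x, q x - a ^ 2 ≤ Pn := fun x => hPn.1 ⟨x, rfl⟩
  have hM₁0 : 0 ≤ M₁ := hM₁ ▸ Real.sSup_nonneg (by rintro _ ⟨t, -, rfl⟩; exact abs_nonneg _)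
  have hLip : ∀ s t, |s| ≤ R → |t| ≤ R → |f s - f t| ≤ M₁ * |s - t| := fun s t hs ht =>
    hM₁ ▸ hf.abs_sub_le_sSup_abs_deriv_mul
      (by constructor <;> linarith [abs_le.1 hs, abs_nonneg s])
      (by constructor <;> linarith [abs_le.1 ht, abs_nonneg t])
  have hPM : Pn + M₁ ≤ γ * a ^ 2 := by rwa [div_le_iff₀ (by positivity)] at hcond2
  have hu₀unif : UniformContinuous u₀ := by
    have hgap : 0 < a ^ 2 - M₁ := by
      nlinarith [(sub_nonneg.2 (hq 0)).trans (hP 0), mul_pos hγ (pow_pos ha 2)]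
    refine uniformContinuous_of_abs_sub_le_mul hqunif (C := R / (a ^ 2 - M₁)) fun x y => ?_
    rw [div_mul_eq_mul_div, le_div_iff₀ hgap, mul_comm]
    exact sub_mul_abs_sub_le_of_mul_eq hq hLip hu₀bdd hu₀eq x y
  rw [Metric.tendsto_nhds]
  intro η hη
  obtain ⟨δ, hδ, hmod⟩ := Metric.uniformContinuous_iff_le.1 hu₀unif ((1 - γ) * η / 2)
    (by positivity)
  have htail := (tendsto_exp_neg_div_nhdsGT_zero (c := a * δ / 2) (by positivity)).const_mul (8 * R)
  rw [mul_zero] at htail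
  filter_upwards [self_mem_nhdsWithin,
    htail.eventually (gt_mem_nhds (show (0 : ℝ) < (1 - γ) * η / 2 by positivity))]
    with ε (hε : 0 < ε) htailε
  have hest := norm_sub_le_of_eq_integral_greenKernel ha hε hδ.le hqunif.continuous hq hP
    hf.continuous hM₁0 hLip hPM (huR ε hε) hu₀R (hueq ε hε) hu₀eq fun x y hxy => hmod hxy
  rw [dist_zero_right, norm_norm]
  nlinarith

/-- Theorem 1.2 (integral-equation form). Here `q` is bounded and uniformly
continuous with `q ≥ a²`, `p = q - a²`, and `Pn` is the sup-norm `‖p‖∞` of `p`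
(`p ≥ 0`, so `Pn` is the least upper bound of the range of `p`, which also
encodes boundedness of `q`). Under the smallness conditions, the solutions `u ε`
of the integral equation converge in sup-norm, as `ε → 0⁺`, to the solution `u`
of the limiting equation `q(x)u = f(u)`. -/
theorem solutions_converge_to_limiting_solution (a R γ : ℝ) (ha : 0 < a) (hR : 0 < R)
    (hγ0 : 0 < γ) (hγ1 : γ < 1)
    (q : EuclideanSpace ℝ (Fin 3) → ℝ)
    (hqunif : UniformContinuous q) (hq : ∀ x, a ^ 2 ≤ q x)
    (Pn : ℝ) (hPn : IsLUB (Set.range fun x => q x - a ^ 2) Pn)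
    (f : ℝ → ℝ) (hf : ContDiff ℝ 1 f)
    (M : ℝ) (hM : M = sSup ((fun t => |f t|) '' Set.Icc (-R) R))
    (M₁ : ℝ) (hM₁ : M₁ = sSup ((fun t => |deriv f t|) '' Set.Icc (-(2 * R)) (2 * R)))
    (hcond1 : (Pn * R + M) / a ^ 2 ≤ R)
    (hcond2 : (Pn + M₁) / a ^ 2 ≤ γ)
    (u : ℝ → BoundedContinuousFunction (EuclideanSpace ℝ (Fin 3)) ℝ)
    (huR : ∀ ε : ℝ, 0 < ε → ‖u ε‖ ≤ R)
    (hueq : ∀ ε : ℝ, 0 < ε → ∀ x : EuclideanSpace ℝ (Fin 3),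
      u ε x = ∫ y : EuclideanSpace ℝ (Fin 3),
        Real.exp (-(a / ε) * ‖x - y‖) / (4 * Real.pi * ε ^ 2 * ‖x - y‖) *
          (-(q y - a ^ 2) * u ε y + f (u ε y)))
    (u₀ : BoundedContinuousFunction (EuclideanSpace ℝ (Fin 3)) ℝ)
    (hu₀R : ‖u₀‖ ≤ R)
    (hu₀eq : ∀ x : EuclideanSpace ℝ (Fin 3), q x * u₀ x = f (u₀ x)) :
    Filter.Tendsto (fun ε : ℝ => ‖u ε - u₀‖) (nhdsWithin 0 (Set.Ioi 0)) (nhds 0) :=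
  solutions_converge_to_limiting_solution_general a R γ ha hγ1 q hqunif hq Pn hPn f hf M₁ hM₁ hcond2
    u huR hueq u₀ hu₀R hu₀eq
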